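/- For every odd integer j ≥ 1 and all odd integers a, b with 3 ≤ a ≤ b, the rooted tree RT(0^j, a, b) is super edge-graceful. -/

import Mathlib

/-- Edge type of the rooted tree `RT(a₀, …, a_{n-1})`: one edge from the root to each
child `i` (`Sum.inl i`), and one edge from child `i` to each of its `a i` leaf children
(`Sum.inr ⟨i, m⟩`).  The number of edges is `q = n + ∑ i, a i`. -/
abbrev RTEdge (n : ℕ) (a : Fin n → ℕ) := (Fin n) ⊕ (Σ i : Fin n, Fin (a i))

/-- Vertex type of the rooted tree `RT(a₀, …, a_{n-1})`: the root (`none`), the children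
`some (.inl i)` of the root, and the leaves `some (.inr ⟨i, m⟩)` attached to child `i`.
The number of vertices is `p = q + 1`. -/
abbrev RTVertex (n : ℕ) (a : Fin n → ℕ) := Option (RTEdge n a)

/-- The vertex labeling induced by an edge labeling `f`: each vertex gets the sum of the
labels of the edges incident with it. -/
def vertexSum {n : ℕ} (a : Fin n → ℕ) (f : RTEdge n a → ℤ) : RTVertex n a → ℤ
  | none => ∑ i : Fin n, f (Sum.inl i)
  | some (Sum.inl i) => f (Sum.inl i) + ∑ m : Fin (a i), f (Sum.inr ⟨i, m⟩)
  | some (Sum.inr ⟨i, m⟩) => f (Sum.inr ⟨i, m⟩)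

/-- The target label set for `q` objects: `{0, ±1, …, ±(q-1)/2}` if `q` is odd, and
`{±1, …, ±(q/2)}` if `q` is even. -/
noncomputable def segSet (q : ℕ) : Finset ℤ :=
  if q % 2 = 0 then (Finset.Icc (-((q / 2 : ℕ) : ℤ)) ((q / 2 : ℕ) : ℤ)).erase 0
  else Finset.Icc (-((q / 2 : ℕ) : ℤ)) ((q / 2 : ℕ) : ℤ)

/-- The rooted tree `RT(a₀, …, a_{n-1})` is super edge-graceful: there is an edge
labeling which is a bijection onto `{0, ±1, …, ±(q-1)/2}` (`q` odd) resp.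
`{±1, …, ±(q/2)}` (`q` even) whose induced vertex labeling is a bijection onto
`{0, ±1, …, ±(p-1)/2}` (`p` odd) resp. `{±1, …, ±(p/2)}` (`p` even), where
`q = n + ∑ i, a i` and `p = q + 1`. -/
def IsSEG {n : ℕ} (a : Fin n → ℕ) : Prop :=
  ∃ f : RTEdge n a → ℤ,
    Set.BijOn f Set.univ ↑(segSet (n + ∑ i, a i)) ∧
    Set.BijOn (vertexSum a f) Set.univ ↑(segSet (n + ∑ i, a i + 1))

/-- The sequence `(0^j, a, b)` of length `j + 2`. -/
def seq2 (j a b : ℕ) : Fin (j + 2) → ℕ :=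
  fun i => if (i : ℕ) < j then 0 else if (i : ℕ) = j then a else b

/-!
Write `j = 2r+1`, `a = 2s+3`, `b = 2u+3` and `S = r+s+u+4`, so that `q = 2S+1` and `p = 2S+2`.
Most edge labels come in pairs `±2, …, ±(S-3)`: `r` pairs on the leafless root edges but one,
`s` pairs on the leaves of the `a`-child and `u` pairs on those of the `b`-child. The nine
remaining labels `0, ±1, ±(S-2), ±(S-1), ±S` go to the other three root edges (`1`; `0` to the
`a`-child; `S` to the `b`-child) and the last three leaves of each child
(`-S, -(S-1), S-2` resp. `-1, -(S-2), S-1`). Since the pairs cancel, the root gets `S+1`, the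
`a`-child `0 - (S+1)` and the `b`-child `S + 0`, while every other vertex gets the label of the
edge above it. So the vertex labels are the edge labels with `0` replaced by `-(S+1)`, together
with `S+1`: exactly `±1, …, ±(S+1)`.
-/

open Finset Function

theorem segSet_two_mul_add_one (S : ℕ) : segSet (2 * S + 1) = Icc (-(S : ℤ)) S := by
  rw [segSet, if_neg (by omega), show (2 * S + 1) / 2 = S by omega]

theorem segSet_two_mul_add_two (S : ℕ) :
    segSet (2 * S + 2) = (Icc (-((S : ℤ) + 1)) (S + 1)).erase 0 := by
  rw [segSet, if_pos (by omega), show (2 * S + 2) / 2 = S + 1 by omega]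
  push_cast
  rfl

theorem Set.BijOn.optionElim_update {E : Type*} [DecidableEq E] {f : E → ℤ} {S : ℤ}
    (hf : Set.BijOn f Set.univ (Set.Icc (-S) S)) {z : E} (hz : f z = 0) :
    Set.BijOn (fun v : Option E => v.elim (S + 1) (update f z (-(S + 1)))) Set.univ
      (Set.Icc (-(S + 1)) (S + 1) \ {0}) := by
  have hmem (e : E) : -S ≤ f e ∧ f e ≤ S := hf.mapsTo (Set.mem_univ e)
  have hinj {e e' : E} (h : f e = f e') : e = e' := hf.injOn (Set.mem_univ e) (Set.mem_univ e') h
  have hS : 0 ≤ S := by linarith [hmem z]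
  refine ⟨?_, ?_, ?_⟩
  · rintro (_ | e) -
    · simp only [Option.elim, Set.mem_sdiff, Set.mem_Icc, Set.mem_singleton_iff]
      omega
    obtain rfl | he := eq_or_ne e z
    · simp only [Option.elim, update_self, Set.mem_sdiff, Set.mem_Icc, Set.mem_singleton_iff]
      omega
    · have hfe : f e ≠ 0 := fun h => he (hinj (h.trans hz.symm))
      simp only [Option.elim, update_of_ne he, Set.mem_sdiff, Set.mem_Icc,
        Set.mem_singleton_iff]
      exact ⟨hmem e |>.imp (by omega) (by omega), hfe⟩
  · rintro (_ | e) - (_ | e') - h <;> simp only [Option.elim, update_apply] at h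
    · rfl
    · split_ifs at h <;> linarith [hmem e']
    · split_ifs at h <;> linarith [hmem e]
    · split_ifs at h with h₁ h₂ h₂
      · rw [h₁, h₂]
      · linarith [hmem e']
      · linarith [hmem e]
      · rw [hinj h]
  · rintro y ⟨⟨hy₁, hy₂⟩, hy₀⟩
    rw [Set.mem_singleton_iff] at hy₀
    by_cases htop : y = S + 1
    · exact ⟨none, Set.mem_univ _, htop.symm⟩
    by_cases hbot : y = -(S + 1)
    · exact ⟨some z, Set.mem_univ _, by simp [hbot]⟩
    obtain ⟨e, -, rfl⟩ := hf.surjOn (show y ∈ Set.Icc (-S) S from ⟨by omega, by omega⟩)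
    have he : e ≠ z := by
      rintro rfl
      exact hy₀ hz
    exact ⟨some e, Set.mem_univ _, by simp [update_of_ne he]⟩

theorem card_rtEdge {n : ℕ} (a : Fin n → ℕ) : Fintype.card (RTEdge n a) = n + ∑ i, a i := by
  simp [Fintype.card_sigma]

theorem isSEG_of_vertexSum_eq_elim_update {n : ℕ} {a : Fin n → ℕ} {S : ℕ}
    (hq : n + ∑ i, a i = 2 * S + 1) {f : RTEdge n a → ℤ} (hf : Injective f)
    (hmem : ∀ e, f e ∈ Set.Icc (-(S : ℤ)) S) {z : RTEdge n a} (hz : f z = 0)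
    (hv : vertexSum a f = fun v => v.elim ((S : ℤ) + 1) (update f z (-((S : ℤ) + 1)))) :
    IsSEG a := by
  have hsurj := surjOn_of_injOn_of_card_le (s := univ) (t := Icc (-(S : ℤ)) S) f
    (fun e _ => by simpa using hmem e) hf.injOn (by
      rw [card_univ, card_rtEdge, hq, Int.card_Icc]
      omega)
  rw [coe_univ, coe_Icc] at hsurj
  have hbij : Set.BijOn f Set.univ (Set.Icc (-(S : ℤ)) S) :=
    ⟨fun e _ => hmem e, hf.injOn, hsurj⟩
  refine ⟨f, ?_, ?_⟩
  · rw [hq, segSet_two_mul_add_one, coe_Icc]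
    exact hbij
  · rw [hq, segSet_two_mul_add_two, coe_erase, coe_Icc, hv]
    exact hbij.optionElim_update hz

def pmSeq (c : ℤ) (t : ℕ) : ℤ := if t % 2 = 0 then c + (t / 2 : ℕ) else -(c + (t / 2 : ℕ))

theorem sum_range_two_mul_pmSeq (c : ℤ) (n : ℕ) : ∑ t ∈ range (2 * n), pmSeq c t = 0 := by
  induction n with
  | zero => simp
  | succ n ih =>
    rw [Nat.mul_succ, sum_range_succ, sum_range_succ, ih, pmSeq, pmSeq,
      if_pos (by omega), if_neg (by omega), show (2 * n + 1) / 2 = 2 * n / 2 by omega]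
    ring

def pmBlock (c : ℤ) (n : ℕ) (x y z : ℤ) (t : ℕ) : ℤ :=
  if t < 2 * n then pmSeq c t else if t = 2 * n then x else if t = 2 * n + 1 then y else z

theorem sum_range_pmBlock (c : ℤ) (n : ℕ) (x y z : ℤ) :
    ∑ t ∈ range (2 * n + 3), pmBlock c n x y z t = x + y + z := by
  have hpm : ∑ t ∈ range (2 * n), pmBlock c n x y z t = 0 := by
    rw [← sum_range_two_mul_pmSeq c n]
    exact sum_congr rfl fun t ht => if_pos (mem_range.1 ht)
  rw [show 2 * n + 3 = 2 * n + 1 + 1 + 1 from rfl, sum_range_succ, sum_range_succ,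
    sum_range_succ, hpm]
  simp [pmBlock]

theorem sum_seq2 (j a b : ℕ) : ∑ i, seq2 j a b i = a + b := by
  simp [Fin.sum_univ_castSucc, seq2]

theorem seq2_leaf_index {j a b : ℕ} (i : Fin (j + 2)) (m : Fin (seq2 j a b i)) :
    ((i : ℕ) = j ∧ (m : ℕ) < a) ∨ ((i : ℕ) = j + 1 ∧ (m : ℕ) < b) := by
  have hm : (m : ℕ) < seq2 j a b i := m.2
  obtain h | h | h : (i : ℕ) < j ∨ (i : ℕ) = j ∨ (i : ℕ) = j + 1 := by omega
  · simp [seq2, h] at hm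
  · simp [seq2, h] at hm
    omega
  · simp [seq2, h] at hm
    omega

theorem Sigma.fin_ext {n : ℕ} {a : Fin n → ℕ} {x y : Σ i : Fin n, Fin (a i)}
    (hi : (x.1 : ℕ) = y.1) (hm : (x.2 : ℕ) = y.2) : x = y := by
  obtain ⟨i, m⟩ := x
  obtain ⟨i', m'⟩ := y
  obtain rfl : i = i' := Fin.ext hi
  obtain rfl : m = m' := Fin.ext hm
  rfl

section

variable (r s u : ℕ)

def seq2EdgeLabel : RTEdge (2 * r + 1 + 2) (seq2 (2 * r + 1) (2 * s + 3) (2 * u + 3)) → ℤ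
  | .inl i => pmBlock 2 r 1 0 (r + s + u + 4) i
  | .inr ⟨i, m⟩ =>
    if (i : ℕ) = 2 * r + 1 then
      pmBlock (r + 2) s (-(r + s + u + 4)) (-(r + s + u + 3)) (r + s + u + 2) m
    else pmBlock (r + s + 2) u (-1) (-(r + s + u + 2)) (r + s + u + 3) m

theorem seq2EdgeLabel_injective : Injective (seq2EdgeLabel r s u) := by
  rintro (i₁ | ⟨i₁, m₁⟩) (i₂ | ⟨i₂, m₂⟩) h <;> simp only [seq2EdgeLabel] at h
  · have := i₁.2
    have := i₂.2
    simp only [pmBlock, pmSeq] at h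
    exact congrArg Sum.inl (Fin.ext (by split_ifs at h <;> omega))
  · have := i₁.2
    rcases seq2_leaf_index i₂ m₂ with ⟨_, _⟩ | ⟨_, _⟩ <;> split_ifs at h <;>
      simp only [pmBlock, pmSeq] at h <;> exfalso <;> split_ifs at h <;> omega
  · have := i₂.2
    rcases seq2_leaf_index i₁ m₁ with ⟨_, _⟩ | ⟨_, _⟩ <;> split_ifs at h <;>
      simp only [pmBlock, pmSeq] at h <;> exfalso <;> split_ifs at h <;> omega
  · have : (i₁ : ℕ) = i₂ ∧ (m₁ : ℕ) = m₂ := by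
      rcases seq2_leaf_index i₁ m₁ with ⟨_, _⟩ | ⟨_, _⟩ <;>
        rcases seq2_leaf_index i₂ m₂ with ⟨_, _⟩ | ⟨_, _⟩ <;>
        split_ifs at h <;> (try omega) <;>
        simp only [pmBlock, pmSeq] at h <;> split_ifs at h <;> omega
    exact congrArg Sum.inr (Sigma.fin_ext this.1 this.2)

theorem seq2EdgeLabel_mem_Icc
    (e : RTEdge (2 * r + 1 + 2) (seq2 (2 * r + 1) (2 * s + 3) (2 * u + 3))) :
    seq2EdgeLabel r s u e ∈ Set.Icc (-((r + s + u + 4 : ℕ) : ℤ)) (r + s + u + 4 : ℕ) := by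
  rw [Set.mem_Icc]
  rcases e with i | ⟨i, m⟩ <;> simp only [seq2EdgeLabel, pmBlock, pmSeq]
  · have := i.2
    split_ifs <;> omega
  · rcases seq2_leaf_index i m with ⟨_, _⟩ | ⟨_, _⟩ <;> split_ifs <;> omega

theorem vertexSum_seq2EdgeLabel :
    vertexSum _ (seq2EdgeLabel r s u) = fun v => v.elim (((r + s + u + 4 : ℕ) : ℤ) + 1)
      (update (seq2EdgeLabel r s u) (.inl ⟨2 * r + 1, by omega⟩)
        (-(((r + s + u + 4 : ℕ) : ℤ) + 1))) := by
  funext v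
  rcases v with _ | (i | ⟨i, m⟩)
  · simp only [vertexSum, seq2EdgeLabel, Option.elim]
    rw [Fin.sum_univ_eq_sum_range (pmBlock 2 r 1 0 _) (2 * r + 1 + 2), sum_range_pmBlock]
    push_cast
    ring
  · simp only [vertexSum, Option.elim, update_apply, Sum.inl.injEq, Fin.ext_iff, seq2EdgeLabel]
    rw [Fin.sum_univ_eq_sum_range (fun t => if (i : ℕ) = 2 * r + 1 then
      pmBlock (r + 2) s (-(r + s + u + 4)) (-(r + s + u + 3)) (r + s + u + 2) t
      else pmBlock (r + s + 2) u (-1) (-(r + s + u + 2)) (r + s + u + 3) t)]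
    obtain h | h | h :
        (i : ℕ) < 2 * r + 1 ∨ (i : ℕ) = 2 * r + 1 ∨ (i : ℕ) = 2 * r + 2 := by omega
    · simp [seq2, h, h.ne]
    · simp [seq2, h, sum_range_pmBlock]
      simp [pmBlock]
      ring
    · simp [seq2, h, sum_range_pmBlock]
      ring
  · simp [vertexSum]

theorem isSEG_seq2_odd : IsSEG (seq2 (2 * r + 1) (2 * s + 3) (2 * u + 3)) :=
  isSEG_of_vertexSum_eq_elim_update (by rw [sum_seq2]; ring) (seq2EdgeLabel_injective r s u)
    (seq2EdgeLabel_mem_Icc r s u) (by simp [seq2EdgeLabel, pmBlock])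
    (vertexSum_seq2EdgeLabel r s u)

end

theorem stmt7_general (j a b : ℕ) (hj : Odd j) (ha : Odd a) (hb : Odd b)
    (ha3 : 3 ≤ a) (hab : a ≤ b) : IsSEG (seq2 j a b) := by
  obtain ⟨r, rfl⟩ := hj
  obtain ⟨s, rfl⟩ : ∃ s, a = 2 * s + 3 := by
    obtain ⟨k, rfl⟩ := ha
    exact ⟨k - 1, by omega⟩
  obtain ⟨u, rfl⟩ : ∃ u, b = 2 * u + 3 := by
    obtain ⟨k, rfl⟩ := hb
    exact ⟨k - 1, by omega⟩
  exact isSEG_seq2_odd r s u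

/-- For every odd integer `j ≥ 1` and all odd integers `a, b` with `3 ≤ a ≤ b`, the
rooted tree `RT(0^j, a, b)` is super edge-graceful. -/
theorem stmt7 (j a b : ℕ) (hj : Odd j) (hj1 : 1 ≤ j) (ha : Odd a) (hb : Odd b)
    (ha3 : 3 ≤ a) (hab : a ≤ b) : IsSEG (seq2 j a b) :=
  stmt7_general j a b hj ha hb ha3 hab
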